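/- arXiv:0811.0056 — 2 statements merged into one kernel-verified Lean document; each statement's English description precedes it below -/
import Mathlib

section
/- For every integer k ≥ 1 and every x ∈ X one has (S*)^k e_x = (I_k(x))^{-1/2} e_{T^k(x)}, where S* is the Hilbert-space adjoint of S. -/
open Classical

noncomputable section

/-- `ℓ²(X)`: the Hilbert space of square-summable complex families indexed by `X`. -/
abbrev l2 (X : Type*) : Type _ := lp (fun _ : X => ℂ) 2

/-- The orthonormal basis vector `e_x` of `ℓ²(X)`. -/
def e {X : Type*} (x : X) : l2 X := lp.single 2 x 1

/-- `I_k(x) = ∏_{j=1}^{k} ℒ(1)(T^j(x))`, where `ℒ(1)(x) = card (T⁻¹({x}))`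
(with `I_0 = 1`). -/
def Ik {X : Type*} (T : X → X) (k : ℕ) (x : X) : ℝ :=
  ∏ j ∈ Finset.range k, (Nat.card (T ⁻¹' {T^[j + 1] x}) : ℝ)

end

/-!
The adjoint of `S` is a weighted composition operator: `⟪S e_z, e_x⟫` is the `x`-coordinate of
`ℒ(1)(z)^{-1/2} ∑_{T y = z} e_y`, which vanishes unless `z = T x`, so
`S* e_x = ℒ(1)(T x)^{-1/2} e_{T x}`. Iterating multiplies the weights along the orbit
`T x, T² x, …, T^k x`, and the product of their inverse square roots is `I_k(x)^{-1/2}`.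
-/

theorem IsCoveringMap.finite_preimage_singleton {E X : Type*} [TopologicalSpace E]
    [TopologicalSpace X] [CompactSpace E] [T1Space X] {f : E → X} (hf : IsCoveringMap f)
    (x : X) : (f ⁻¹' {x}).Finite :=
  (isClosed_singleton.preimage hf.continuous).isCompact.finite
    (isDiscrete_iff_discreteTopology.mpr (hf x).1)

theorem ContinuousLinearMap.pow_apply_of_apply_eq_smul {𝕜 E X : Type*} [CommSemiring 𝕜]
    [AddCommMonoid E] [Module 𝕜 E] [TopologicalSpace E] {A : E →L[𝕜] E} {b : X → E}
    {T : X → X} {c : X → 𝕜} (hA : ∀ x, A (b x) = c x • b (T x)) (k : ℕ) (x : X) :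
    (A ^ k) (b x) = (∏ j ∈ Finset.range k, c (T^[j] x)) • b (T^[k] x) := by
  induction k generalizing x with
  | zero => simp
  | succ k ih =>
    rw [pow_succ, mul_apply_eq_comp, hA, map_smul, ih, smul_smul, Finset.prod_range_succ',
      Function.iterate_succ_apply, Function.iterate_zero_apply, mul_comm]
    simp only [Function.iterate_succ_apply]

namespace l2

variable {X Y : Type*}

theorem e_apply (y x : X) : e y x = if x = y then 1 else 0 := by
  simp [e, lp.single_apply, Pi.single_apply]

theorem inner_e_left (y : X) (v : l2 X) : inner ℂ (e y) v = v y := by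
  simp [e, lp.inner_single_left]

theorem finsum_mem_e_apply {s : Set X} (hs : s.Finite) (x : X) :
    (∑ᶠ y ∈ s, e y) x = if x ∈ s then 1 else 0 := by
  rw [finsum_mem_eq_finite_toFinset_sum _ hs, lp.coeFn_sum, Finset.sum_apply]
  simp [e_apply]

theorem adjoint_apply_e_of_apply_e_eq_smul_finsum_fiber {T : X → Y}
    (hT : ∀ y, (T ⁻¹' {y}).Finite) (c : Y → ℝ) (S : l2 Y →L[ℂ] l2 X)
    (hS : ∀ y, S (e y) = (c y : ℂ) • ∑ᶠ x ∈ T ⁻¹' {y}, e x) (x : X) :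
    S.adjoint (e x) = (c (T x) : ℂ) • e (T x) := by
  ext y
  rw [← inner_e_left y (S.adjoint (e x)), ContinuousLinearMap.adjoint_inner_right, hS,
    ← inner_conj_symm, inner_e_left, lp.coeFn_smul, lp.coeFn_smul, Pi.smul_apply, Pi.smul_apply,
    finsum_mem_e_apply (hT y), e_apply]
  by_cases hxy : T x = y
  · subst hxy
    simp
  · simp [hxy, Ne.symm hxy]

end l2

theorem pow_adjoint_S_apply_basis_general {X : Type*} [TopologicalSpace X] [CompactSpace X]
    [T2Space X] (T : X → X) (hT : IsCoveringMap T)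
    (S : l2 X →L[ℂ] l2 X)
    (hS : ∀ x : X, S (e x) = (((Real.sqrt (Nat.card (T ⁻¹' {x})))⁻¹ : ℝ) : ℂ) •
      ∑ᶠ y ∈ T ⁻¹' {x}, e y) :
    ∀ k : ℕ, 1 ≤ k → ∀ x : X,
      ((ContinuousLinearMap.adjoint S) ^ k) (e x) =
        (((Real.sqrt (Ik T k x))⁻¹ : ℝ) : ℂ) • e (T^[k] x) := by
  intro k _ x
  have hS_adjoint :=
    l2.adjoint_apply_e_of_apply_e_eq_smul_finsum_fiber hT.finite_preimage_singleton _ S hS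
  rw [ContinuousLinearMap.pow_apply_of_apply_eq_smul hS_adjoint, Ik,
    Real.sqrt_prod _ fun _ _ => Nat.cast_nonneg _]
  push_cast
  simp only [Finset.prod_inv_distrib, Function.iterate_succ_apply']

/-- Let `X` be a compact Hausdorff space, `T : X → X` a covering map and
`S` the bounded operator on `ℓ²(X)` with `S e_x = (ℒ(1)(x))^{-1/2} ∑_{y ∈ T⁻¹({x})} e_y`.
Then for every `k ≥ 1` and every `x ∈ X` one has `(S*)^k e_x = (I_k(x))^{-1/2} e_{T^k(x)}`,
where `S*` is the Hilbert-space adjoint of `S`. -/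
theorem pow_adjoint_S_apply_basis {X : Type*} [TopologicalSpace X] [CompactSpace X]
    [T2Space X] (T : X → X) (hT : IsCoveringMap T) (hTsurj : Function.Surjective T)
    (S : l2 X →L[ℂ] l2 X)
    (hS : ∀ x : X, S (e x) = (((Real.sqrt (Nat.card (T ⁻¹' {x})))⁻¹ : ℝ) : ℂ) •
      ∑ᶠ y ∈ T ⁻¹' {x}, e y) :
    ∀ k : ℕ, 1 ≤ k → ∀ x : X,
      ((ContinuousLinearMap.adjoint S) ^ k) (e x) =
        (((Real.sqrt (Ik T k x))⁻¹ : ℝ) : ℂ) • e (T^[k] x) :=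
  pow_adjoint_S_apply_basis_general T hT S hS
end

section
/- Let k, l be natural numbers, let U be an open subset of X such that T^k(x) = T^l(x) for every x ∈ U and such that the restrictions of T^k and T^l to U are injective, and let f : X → ℂ be a continuous function whose support is contained in U. Then M_f S^k (S*)^l M_f = M_g as bounded operators on ℓ²(X), where g is the continuous function g(x) = f(x)²·(I_k(x)·I_l(x))^{-1/2}. -/
open Classical

/-!
In the basis `(e x)`, the relation for `S` says that `S†` is the weighted composition operator
`S† e x = ℒ(1)(T x)^{-1/2} e (T x)`, so `(S v) z = ℒ(1)(T z)^{-1/2} v (T z)`. Iterating,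
`(S^k v) z = I_k(z)^{-1/2} v (T^k z)` and `(S†)^l e x = I_l(x)^{-1/2} e (T^l x)`. Hence the `(z, x)`
matrix entry of `M_f S^k (S†)^l M_f` is `f z f x I_k(z)^{-1/2} I_l(x)^{-1/2} [T^k z = T^l x]`.
If `f z f x ≠ 0`, both points lie in `U`, where `T^k z = T^l x = T^k x` forces `z = x`.
-/

open ContinuousLinearMap

section BasisVectors

variable {X : Type*}

lemma e_apply (x z : X) : e x z = if z = x then 1 else 0 := by
  simp [e, Pi.single_apply]

lemma inner_e_left (z : X) (v : l2 X) : inner ℂ (e z) v = v z := by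
  simp [e, lp.inner_single_left]

lemma l2_ext_e {F : Type*} [NormedAddCommGroup F] [NormedSpace ℂ F] {A B : l2 X →L[ℂ] F}
    (h : ∀ x, A (e x) = B (e x)) : A = B :=
  lp.ext_continuousLinearMap ENNReal.ofNat_ne_top fun x => ContinuousLinearMap.ext_ring (h x)

lemma adjoint_apply_e_apply (A : l2 X →L[ℂ] l2 X) (x z : X) :
    adjoint A (e x) z = starRingEnd ℂ (A (e z) x) := by
  rw [← inner_e_left, adjoint_inner_right, ← inner_conj_symm, inner_e_left]

lemma apply_apply_of_adjoint_apply_e {A : l2 X →L[ℂ] l2 X} {c : X → ℂ} {σ : X → X}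
    (hA : ∀ x, adjoint A (e x) = c x • e (σ x)) (v : l2 X) (z : X) :
    A v z = starRingEnd ℂ (c z) * v (σ z) := by
  rw [← inner_e_left, ← adjoint_inner_left, hA, inner_smul_left, inner_e_left]

lemma apply_apply_of_apply_e_eq_smul {A : l2 X →L[ℂ] l2 X} {c : X → ℂ}
    (hA : ∀ x, A (e x) = c x • e x) (v : l2 X) (z : X) : A v z = c z * v z := by
  have hA' : ∀ x, adjoint A (e x) = starRingEnd ℂ (c x) • e x := fun x => by
    ext z
    rw [adjoint_apply_e_apply, hA, lp.coeFn_smul, Pi.smul_apply, lp.coeFn_smul, Pi.smul_apply,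
      e_apply, e_apply]
    by_cases h : z = x
    · simp [h]
    · simp [h, Ne.symm h]
  simpa using apply_apply_of_adjoint_apply_e hA' v z

end BasisVectors

lemma IsCoveringMap.finite_fiber {X : Type*} [TopologicalSpace X] [CompactSpace X] [T1Space X]
    {T : X → X} (hT : IsCoveringMap T) (x : X) : (T ⁻¹' {x}).Finite :=
  (isClosed_singleton.preimage hT.continuous).isCompact.finite ⟨(hT x).discreteTopology_fiber⟩

lemma Ik_succ {X : Type*} (T : X → X) (n : ℕ) (x : X) :
    Ik T (n + 1) x = Ik T n x * Nat.card (T ⁻¹' {T^[n + 1] x}) :=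
  Finset.prod_range_succ _ n

lemma Ik_nonneg {X : Type*} (T : X → X) (n : ℕ) (x : X) : 0 ≤ Ik T n x :=
  Finset.prod_nonneg fun _ _ => Nat.cast_nonneg _

section TransferOperator

variable {X : Type*} {T : X → X} {S : l2 X →L[ℂ] l2 X} (hfin : ∀ x, (T ⁻¹' {x}).Finite)
  (hS : ∀ x : X, S (e x) = (((Real.sqrt (Nat.card (T ⁻¹' {x})))⁻¹ : ℝ) : ℂ) •
    ∑ᶠ y ∈ T ⁻¹' {x}, e y)
include hfin hS

lemma S_e_apply (x z : X) :
    S (e x) z = if T z = x then (((Real.sqrt (Nat.card (T ⁻¹' {x})))⁻¹ : ℝ) : ℂ) else 0 := by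
  rw [hS x, finsum_mem_eq_finite_toFinset_sum _ (hfin x), lp.coeFn_smul, Pi.smul_apply,
    lp.coeFn_sum, Finset.sum_apply]
  simp only [e_apply, Finset.sum_ite_eq, Set.Finite.mem_toFinset, Set.mem_preimage,
    Set.mem_singleton_iff]
  split_ifs <;> simp

lemma adjoint_S_e (x : X) :
    adjoint S (e x) = (((Real.sqrt (Nat.card (T ⁻¹' {T x})))⁻¹ : ℝ) : ℂ) • e (T x) := by
  ext z
  rw [adjoint_apply_e_apply, S_e_apply hfin hS, lp.coeFn_smul, Pi.smul_apply, e_apply]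
  by_cases h : T x = z
  · subst h; simp
  · simp [h, Ne.symm h]

lemma S_apply_apply (v : l2 X) (z : X) :
    S v z = (((Real.sqrt (Nat.card (T ⁻¹' {T z})))⁻¹ : ℝ) : ℂ) * v (T z) := by
  simpa using apply_apply_of_adjoint_apply_e (adjoint_S_e hfin hS) v z

lemma S_pow_apply_apply (n : ℕ) (v : l2 X) (z : X) :
    (S ^ n) v z = (((Real.sqrt (Ik T n z))⁻¹ : ℝ) : ℂ) * v (T^[n] z) := by
  induction n generalizing v with
  | zero => simp [Ik]
  | succ n ih =>
    rw [pow_succ, mul_apply_eq_comp, ih, S_apply_apply hfin hS, ← Function.iterate_succ_apply' T n,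
      Ik_succ, Real.sqrt_mul (Ik_nonneg T n z), mul_inv]
    push_cast
    ring

lemma adjoint_S_pow_e (n : ℕ) (x : X) :
    (adjoint S ^ n) (e x) = (((Real.sqrt (Ik T n x))⁻¹ : ℝ) : ℂ) • e (T^[n] x) := by
  rw [← star_eq_adjoint, ← star_pow, star_eq_adjoint]
  ext z
  rw [adjoint_apply_e_apply, S_pow_apply_apply hfin hS, lp.coeFn_smul, Pi.smul_apply, e_apply,
    e_apply]
  by_cases h : T^[n] x = z
  · subst h; simp
  · simp [h, Ne.symm h]

end TransferOperator

lemma iterate_eq_iterate_iff_of_mem {X : Type*} {T : X → X} {k l : ℕ} {U : Set X}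
    (hU : ∀ x ∈ U, T^[k] x = T^[l] x) (hinj : Set.InjOn (T^[k]) U) {x z : X}
    (hz : z ∈ U) (hx : x ∈ U) : T^[k] z = T^[l] x ↔ z = x := by
  rw [← hU x hx]
  exact hinj.eq_iff hz hx

open ContinuousLinearMap in
theorem MfSkSlMf_eq_Mg_general {X : Type*} [TopologicalSpace X] [CompactSpace X] [T2Space X]
    (T : X → X) (hT : IsCoveringMap T)
    (S : l2 X →L[ℂ] l2 X)
    (hS : ∀ x : X, S (e x) = (((Real.sqrt (Nat.card (T ⁻¹' {x})))⁻¹ : ℝ) : ℂ) •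
      ∑ᶠ y ∈ T ⁻¹' {x}, e y)
    (k l : ℕ) (U : Set X)
    (hU : ∀ x ∈ U, T^[k] x = T^[l] x)
    (hUinjk : Set.InjOn (T^[k]) U)
    (f : C(X, ℂ)) (hf : tsupport f ⊆ U)
    (Mf Mg : l2 X →L[ℂ] l2 X)
    (hMf : ∀ x : X, Mf (e x) = f x • e x)
    (hMg : ∀ x : X, Mg (e x) =
      (f x ^ 2 * (((Real.sqrt (Ik T k x * Ik T l x))⁻¹ : ℝ) : ℂ)) • e x) :
    Mf ∘L (S ^ k) ∘L ((adjoint S) ^ l) ∘L Mf = Mg := by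
  have hfin := hT.finite_fiber
  have mem_U {y : X} (hy : f y ≠ 0) : y ∈ U := hf (subset_tsupport f hy)
  refine l2_ext_e fun x => lp.ext (funext fun z => ?_)
  simp only [comp_apply, hMf x, map_smul, adjoint_S_pow_e hfin hS, hMg x, lp.coeFn_smul,
    Pi.smul_apply, smul_eq_mul, apply_apply_of_apply_e_eq_smul hMf, S_pow_apply_apply hfin hS,
    e_apply]
  by_cases hfz : f z = 0
  · by_cases h : z = x
    · subst h; simp [hfz]
    · simp [hfz, h]
  by_cases hfx : f x = 0
  · simp [hfx]
  rw [iterate_eq_iterate_iff_of_mem hU hUinjk (mem_U hfz) (mem_U hfx)]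
  split_ifs with h
  · subst h
    rw [Real.sqrt_mul (Ik_nonneg T k z), mul_inv]
    push_cast
    ring
  · simp

open ContinuousLinearMap in
/-- Let `X` be a compact Hausdorff space, `T : X → X` a covering map and
`S` the bounded operator on `ℓ²(X)` with `S e_x = (ℒ(1)(x))^{-1/2} ∑_{y ∈ T⁻¹({x})} e_y`.
Let `k, l ∈ ℕ`, let `U` be open with `T^k = T^l` on `U` and `T^k`, `T^l` injective on `U`,
and let `f : X → ℂ` be continuous with support contained in `U`. Then
`M_f S^k (S*)^l M_f = M_g` on `ℓ²(X)`, where `g(x) = f(x)²·(I_k(x)·I_l(x))^{-1/2}`. -/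
theorem MfSkSlMf_eq_Mg {X : Type*} [TopologicalSpace X] [CompactSpace X] [T2Space X]
    (T : X → X) (hT : IsCoveringMap T) (hTsurj : Function.Surjective T)
    (S : l2 X →L[ℂ] l2 X)
    (hS : ∀ x : X, S (e x) = (((Real.sqrt (Nat.card (T ⁻¹' {x})))⁻¹ : ℝ) : ℂ) •
      ∑ᶠ y ∈ T ⁻¹' {x}, e y)
    (k l : ℕ) (U : Set X) (hUopen : IsOpen U)
    (hU : ∀ x ∈ U, T^[k] x = T^[l] x)
    (hUinjk : Set.InjOn (T^[k]) U) (hUinjl : Set.InjOn (T^[l]) U)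
    (f : C(X, ℂ)) (hf : tsupport f ⊆ U)
    (Mf Mg : l2 X →L[ℂ] l2 X)
    (hMf : ∀ x : X, Mf (e x) = f x • e x)
    (hMg : ∀ x : X, Mg (e x) =
      (f x ^ 2 * (((Real.sqrt (Ik T k x * Ik T l x))⁻¹ : ℝ) : ℂ)) • e x) :
    Mf ∘L (S ^ k) ∘L ((adjoint S) ^ l) ∘L Mf = Mg :=
  MfSkSlMf_eq_Mg_general T hT S hS k l U hU hUinjk f hf Mf Mg hMf hMg
end
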